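/- Let (I, e, d, D, N, θ, (τ_a)) and (I′, e′, d′, D′, N, θ′, (τ′_a)) be two Gauss-sum data with the same integer N, let n be an integer coprime to N and ñ an integer with n·ñ ≡ 1 (mod N), and let (σ, γ, π) and (σ, γ, π′) be Galois symmetries of the two data with the same ring automorphism σ of ℂ and the same γ ∈ ℂ. Suppose there is a real number d_A > 0 such that σ(d_A) is a positive real number, τ′₁ = τ₁ / d_A, and D′ = D / d_A². Then τ′_n = (σ(d_A) / d_A²) · τ_n. In particular, if τ₁ ≠ 0, then τ_n and τ′_n are both nonzero and τ′_n / |τ′_n| = τ_n / |τ_n|. -/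

import Mathlib

/-!
Let `c = γ / σ(σ γ)`. The Galois symmetry `π` rewrites every summand of `τ_n` after reindexing:
`θ(π X)ⁿ = cⁿ σ(θ X)`, because `σ` acts on `N`-th roots of unity as `x ↦ x^ñ` and `ñ² n ≡ ñ`,
and `d(π X)² = (D / σ D) σ(d(X)²)`. Hence `τ_n = cⁿ (D / σ D) σ(τ₁)` for any datum with
symmetry `(σ, γ, π)`. Applying this to both data, the common factor `cⁿ` cancels and the
relations `τ'₁ = τ₁ / d_A`, `D' = D / d_A²` leave the factor `σ(d_A) / d_A²`, a positive real,
which therefore does not change the phase.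
-/

open Complex

theorem zpow_eq_zpow_of_pow_eq_one {G₀ : Type*} [GroupWithZero G₀] {x : G₀} {N : ℕ}
    (hN : N ≠ 0) (hx : x ^ N = 1) {a b : ℤ} (hab : (N : ℤ) ∣ a - b) : x ^ a = x ^ b := by
  have hx0 : x ≠ 0 := by
    rintro rfl
    exact zero_ne_one (by rwa [zero_pow hN] at hx)
  obtain ⟨c, hc⟩ := hab
  rw [show a = b + N * c by omega, zpow_add₀ hx0, zpow_mul, zpow_natCast, hx, one_zpow, mul_one]

theorem IsPrimitiveRoot.map_eq_zpow_of_pow_eq_one {K F : Type*} [Field K] [FunLike F K K]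
    [RingHomClass F K K] (σ : F) {ζ : K} {N : ℕ} [NeZero N] (hζ : IsPrimitiveRoot ζ N) {k : ℤ}
    (hσζ : σ ζ = ζ ^ k) {x : K} (hx : x ^ N = 1) : σ x = x ^ k := by
  obtain ⟨i, -, rfl⟩ := hζ.eq_pow_of_pow_eq_one hx
  rw [map_pow, hσζ, ← zpow_natCast, ← zpow_natCast, ← zpow_mul, ← zpow_mul, mul_comm]

theorem Complex.map_eq_zpow_of_pow_eq_one {F : Type*} [FunLike F ℂ ℂ] [RingHomClass F ℂ ℂ]
    (σ : F) {N : ℕ} (hN : N ≠ 0) {k : ℤ}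
    (hσ : σ (exp (2 * Real.pi * I / N)) = exp (2 * Real.pi * I * k / N)) {x : ℂ}
    (hx : x ^ N = 1) : σ x = x ^ k := by
  have : NeZero N := ⟨hN⟩
  refine (isPrimitiveRoot_exp N hN).map_eq_zpow_of_pow_eq_one σ ?_ hx
  rw [hσ, ← exp_int_mul]
  ring_nf

section GaloisGaussSum

variable {ι K F : Type*} [Fintype ι] [Field K] [FunLike F K K] [RingHomClass F K K]
  (σ : F) {N : ℕ} {n nt : ℤ}

theorem zpow_eq_of_map_map_div (hN : N ≠ 0) (hnt : (N : ℤ) ∣ n * nt - 1)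
    (hσ : ∀ x : K, x ^ N = 1 → σ x = x ^ nt) {θ θ' γ : K} (hθ : θ ^ N = 1) (hγ : γ ≠ 0)
    (hθθ' : σ (σ (θ / γ)) = θ' / γ) : θ' ^ n = (γ / σ (σ γ)) ^ n * σ θ := by
  have hσσγ : σ (σ γ) ≠ 0 := by simpa only [map_ne_zero] using hγ
  have hθ' : θ' = θ ^ (nt * nt) * (γ / σ (σ γ)) := by
    rw [map_div₀, map_div₀, hσ θ hθ, map_zpow₀, hσ θ hθ, ← zpow_mul] at hθθ'
    field_simp at hθθ' ⊢
    linear_combination -hθθ'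
  have hexp : (N : ℤ) ∣ nt * nt * n - nt := by
    rw [show nt * nt * n - nt = nt * (n * nt - 1) by ring]
    exact hnt.mul_left nt
  rw [hθ', mul_zpow, mul_comm, ← zpow_mul, hσ θ hθ, zpow_eq_zpow_of_pow_eq_one hN hθ hexp]

theorem gaussSum_eq_of_galoisSymmetry (hN : N ≠ 0) (hnt : (N : ℤ) ∣ n * nt - 1)
    (hσ : ∀ x : K, x ^ N = 1 → σ x = x ^ nt) (θ w : ι → K) (hθ : ∀ X, θ X ^ N = 1)
    (τ : ℤ → K) (hτ : ∀ a : ℤ, τ a = ∑ X, θ X ^ a * w X) {D γ : K} (hD : D ≠ 0) (hγ : γ ≠ 0)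
    (π : ι ≃ ι) (hπw : ∀ X, σ (w X / D) = w (π X) / D)
    (hπθ : ∀ X, σ (σ (θ X / γ)) = θ (π X) / γ) :
    τ n = (γ / σ (σ γ)) ^ n * (D / σ D) * σ (τ 1) := by
  have hσD : σ D ≠ 0 := by simpa only [map_ne_zero] using hD
  have hπw' : ∀ X, w (π X) = D / σ D * σ (w X) := by
    intro X
    have h := hπw X
    rw [map_div₀] at h
    field_simp at h ⊢
    linear_combination -h
  have hterm : ∀ X, θ (π X) ^ n * w (π X) = (γ / σ (σ γ)) ^ n * (D / σ D) * σ (θ X * w X) := by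
    intro X
    rw [zpow_eq_of_map_map_div σ hN hnt hσ (hθ X) hγ (hπθ X), hπw', map_mul]
    ring
  rw [hτ, ← π.sum_comp, Finset.sum_congr rfl fun X _ => hterm X, ← Finset.mul_sum, ← map_sum, hτ]
  simp only [zpow_one]

end GaloisGaussSum

theorem Complex.ofReal_mul_div_norm {r : ℝ} (hr : 0 < r) (z : ℂ) :
    (r * z) / (‖(r : ℂ) * z‖ : ℂ) = z / ‖z‖ := by
  rw [norm_mul, norm_real, Real.norm_of_nonneg hr.le, ofReal_mul,
    mul_div_mul_left _ _ (ofReal_ne_zero.2 hr.ne')]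

theorem higher_gauss_sum_local_modules_general
    {ι ι' : Type*} [Fintype ι] [Fintype ι'] (e : ι)
    (d : ι → ℝ) (hd : ∀ X, d X ≠ 0)
    (d' : ι' → ℝ)
    (D : ℝ) (hD : D = ∑ X, (d X) ^ 2)
    (D' : ℝ)
    (N : ℕ) (hN : 1 ≤ N)
    (θ : ι → ℂ) (hθN : ∀ X, θ X ^ N = 1)
    (θ' : ι' → ℂ) (hθN' : ∀ X, θ' X ^ N = 1)
    (τ : ℤ → ℂ) (hτ : ∀ a : ℤ, τ a = ∑ X, θ X ^ a * ((d X : ℂ)) ^ 2)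
    (τ' : ℤ → ℂ) (hτ' : ∀ a : ℤ, τ' a = ∑ X, θ' X ^ a * ((d' X : ℂ)) ^ 2)
    (n nt : ℤ) (hnt : (N : ℤ) ∣ (n * nt - 1))
    (σ : ℂ ≃+* ℂ)
    (hσ : σ (Complex.exp (2 * (Real.pi : ℂ) * Complex.I / N)) =
      Complex.exp (2 * (Real.pi : ℂ) * Complex.I * nt / N))
    (γ : ℂ) (hγ0 : γ ≠ 0)
    (g : ι ≃ ι)
    (hgd : ∀ X, σ (((d X : ℂ)) ^ 2 / (D : ℂ)) = ((d (g X) : ℂ)) ^ 2 / (D : ℂ))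
    (hgθ : ∀ X, σ (σ (θ X / γ)) = θ (g X) / γ)
    (g' : ι' ≃ ι')
    (hgd' : ∀ X, σ (((d' X : ℂ)) ^ 2 / (D' : ℂ)) = ((d' (g' X) : ℂ)) ^ 2 / (D' : ℂ))
    (hgθ' : ∀ X, σ (σ (θ' X / γ)) = θ' (g' X) / γ)
    (dA : ℝ) (hdA : 0 < dA)
    (hσdA : ∃ r : ℝ, 0 < r ∧ σ (dA : ℂ) = (r : ℂ))
    (hτ'1 : τ' 1 = τ 1 / (dA : ℂ))
    (hDD' : D' = D / dA ^ 2) :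
    τ' n = (σ (dA : ℂ) / (dA : ℂ) ^ 2) * τ n ∧
    (τ 1 ≠ 0 → τ n ≠ 0 ∧ τ' n ≠ 0 ∧
      τ' n / (‖τ' n‖ : ℂ) = τ n / (‖τ n‖ : ℂ)) := by
  have hN0 : N ≠ 0 := by omega
  have hσ_ne {z : ℂ} (hz : z ≠ 0) : σ z ≠ 0 := (map_ne_zero σ).2 hz
  have hD0 : (D : ℂ) ≠ 0 := by
    rw [ofReal_ne_zero, hD]
    exact (Finset.sum_pos (fun X _ => pow_two_pos_of_ne_zero (hd X)) ⟨e, Finset.mem_univ e⟩).ne'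
  have hdA0 : (dA : ℂ) ≠ 0 := ofReal_ne_zero.2 hdA.ne'
  have hD'D : (D' : ℂ) = D / dA ^ 2 := by rw [hDD']; push_cast; rfl
  have hσroot (x : ℂ) : x ^ N = 1 → σ x = x ^ nt := map_eq_zpow_of_pow_eq_one σ hN0 hσ
  have hτn := gaussSum_eq_of_galoisSymmetry σ hN0 hnt hσroot θ _ hθN τ hτ hD0 hγ0 g hgd hgθ
  have hτ'n := gaussSum_eq_of_galoisSymmetry σ hN0 hnt hσroot θ' _ hθN' τ' hτ'
    (by rw [hD'D]; exact div_ne_zero hD0 (pow_ne_zero 2 hdA0)) hγ0 g' hgd' hgθ'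
  have hmain : τ' n = (σ (dA : ℂ) / (dA : ℂ) ^ 2) * τ n := by
    have hσdA0 := hσ_ne hdA0
    have hσD0 := hσ_ne hD0
    rw [hτ'n, hτn, hτ'1, hD'D, map_div₀, map_div₀, map_pow]
    field_simp
  refine ⟨hmain, fun hτ1 => ?_⟩
  have hτn0 : τ n ≠ 0 := by
    rw [hτn]
    exact mul_ne_zero (mul_ne_zero (zpow_ne_zero n (div_ne_zero hγ0 (hσ_ne (hσ_ne hγ0))))
      (div_ne_zero hD0 (hσ_ne hD0))) (hσ_ne hτ1)
  obtain ⟨r, hr, hσdA_eq⟩ := hσdA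
  have hfactor_pos : 0 < r / dA ^ 2 := by positivity
  have hfactor : σ (dA : ℂ) / (dA : ℂ) ^ 2 = ((r / dA ^ 2 : ℝ) : ℂ) := by
    rw [hσdA_eq]; push_cast; rfl
  rw [hmain, hfactor]
  exact ⟨hτn0, mul_ne_zero (ofReal_ne_zero.2 hfactor_pos.ne') hτn0,
    ofReal_mul_div_norm hfactor_pos _⟩

/-- **Higher Gauss sums of local module categories** (Theorem 4.8 of the paper, abstracted).
Given two Gauss-sum data (for `C` and `C_A^0`) with the same `N`, and Galois symmetries with
the same automorphism `σ` and the same `γ`, if there is a real `d_A > 0` with `σ d_A` a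
positive real, `τ' 1 = τ 1 / d_A` and `D' = D / d_A²`, then
`τ' n = (σ d_A / d_A²) * τ n`; in particular if `τ 1 ≠ 0` then `τ n, τ' n ≠ 0` and the
`n`-th central charges agree: `τ' n / |τ' n| = τ n / |τ n|`. -/
theorem higher_gauss_sum_local_modules
    {ι ι' : Type*} [Fintype ι] [Fintype ι'] (e : ι) (e' : ι')
    (d : ι → ℝ) (hd : ∀ X, d X ≠ 0)
    (d' : ι' → ℝ) (hd' : ∀ X, d' X ≠ 0)
    (D : ℝ) (hD : D = ∑ X, (d X) ^ 2)
    (D' : ℝ) (hD' : D' = ∑ X, (d' X) ^ 2)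
    (N : ℕ) (hN : 1 ≤ N)
    (θ : ι → ℂ) (hθe : θ e = 1) (hθN : ∀ X, θ X ^ N = 1)
    (θ' : ι' → ℂ) (hθe' : θ' e' = 1) (hθN' : ∀ X, θ' X ^ N = 1)
    (τ : ℤ → ℂ) (hτ : ∀ a : ℤ, τ a = ∑ X, θ X ^ a * ((d X : ℂ)) ^ 2)
    (τ' : ℤ → ℂ) (hτ' : ∀ a : ℤ, τ' a = ∑ X, θ' X ^ a * ((d' X : ℂ)) ^ 2)
    (n nt : ℤ) (hn : Int.gcd n N = 1) (hnt : (N : ℤ) ∣ (n * nt - 1))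
    (σ : ℂ ≃+* ℂ)
    (hσ : σ (Complex.exp (2 * (Real.pi : ℂ) * Complex.I / N)) =
      Complex.exp (2 * (Real.pi : ℂ) * Complex.I * nt / N))
    (γ : ℂ) (hγ0 : γ ≠ 0)
    (hγ : γ ^ 3 * (Real.sqrt D : ℂ) = τ 1)
    (hγ' : γ ^ 3 * (Real.sqrt D' : ℂ) = τ' 1)
    (g : ι ≃ ι)
    (hgd : ∀ X, σ (((d X : ℂ)) ^ 2 / (D : ℂ)) = ((d (g X) : ℂ)) ^ 2 / (D : ℂ))
    (hgθ : ∀ X, σ (σ (θ X / γ)) = θ (g X) / γ)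
    (g' : ι' ≃ ι')
    (hgd' : ∀ X, σ (((d' X : ℂ)) ^ 2 / (D' : ℂ)) = ((d' (g' X) : ℂ)) ^ 2 / (D' : ℂ))
    (hgθ' : ∀ X, σ (σ (θ' X / γ)) = θ' (g' X) / γ)
    (dA : ℝ) (hdA : 0 < dA)
    (hσdA : ∃ r : ℝ, 0 < r ∧ σ (dA : ℂ) = (r : ℂ))
    (hτ'1 : τ' 1 = τ 1 / (dA : ℂ))
    (hDD' : D' = D / dA ^ 2) :
    τ' n = (σ (dA : ℂ) / (dA : ℂ) ^ 2) * τ n ∧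
    (τ 1 ≠ 0 → τ n ≠ 0 ∧ τ' n ≠ 0 ∧
      τ' n / (‖τ' n‖ : ℂ) = τ n / (‖τ n‖ : ℂ)) :=
  higher_gauss_sum_local_modules_general e d hd d' D hD D' N hN θ hθN θ' hθN' τ hτ τ' hτ' n nt hnt σ
    hσ γ hγ0 g hgd hgθ g' hgd' hgθ' dA hdA hσdA hτ'1 hDD'
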